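/- Let L be a Leibniz algebra over a field 𝕜 with left center Z. The operator δ is a graded derivation of degree 1 of the multiplication on C(L): for ω ∈ C^n(L) and η ∈ C^m(L), δ(ω·η) = (δω)·η + (−1)^n ω·(δη). -/
import Mathlib


open scoped TensorProduct

universe u v w

/-- A (left) Leibniz algebra over a field `𝕜`. -/
structure LeibnizAlg (𝕜 : Type u) [Field 𝕜] (L : Type v) [AddCommGroup L] [Module 𝕜 L] where
  br : L →ₗ[𝕜] L →ₗ[𝕜] L
  leibniz : ∀ a b c : L, br a (br b c) = br (br a b) c + br b (br a c)

namespace LeibnizAlg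

variable {𝕜 : Type u} [Field 𝕜] {L : Type v} [AddCommGroup L] [Module 𝕜 L]
variable (A : LeibnizAlg 𝕜 L)

/-- The left center `Z = {z | z ∘ e = 0 for all e}`. -/
def leftCenter : Submodule 𝕜 L where
  carrier := {z | ∀ e : L, A.br z e = 0}
  add_mem' := by
    intro a b ha hb
    simp only [Set.mem_setOf_eq] at *
    intro e
    rw [map_add, LinearMap.add_apply, ha e, hb e, add_zero]
  zero_mem' := by
    simp only [Set.mem_setOf_eq]
    intro e
    rw [map_zero, LinearMap.zero_apply]
  smul_mem' := by
    intro c x hx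
    simp only [Set.mem_setOf_eq] at *
    intro e
    rw [map_smul, LinearMap.smul_apply, hx e, smul_zero]

lemma mem_leftCenter_iff {z : L} : z ∈ A.leftCenter ↔ ∀ e : L, A.br z e = 0 := Iff.rfl

/-- The symmetric product `(a,b) = a∘b + b∘a`. -/
def sp (a b : L) : L := A.br a b + A.br b a

lemma sp_mem (a b : L) : A.sp a b ∈ A.leftCenter := by
  rw [mem_leftCenter_iff]
  intro e
  have h1 := A.leibniz a b e
  have h2 := A.leibniz b a e
  have hx : A.br (A.br a b) e = A.br a (A.br b e) - A.br b (A.br a e) :=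
    eq_sub_iff_add_eq.mpr h1.symm
  have hy : A.br (A.br b a) e = A.br b (A.br a e) - A.br a (A.br b e) :=
    eq_sub_iff_add_eq.mpr h2.symm
  rw [sp, map_add, LinearMap.add_apply, hx, hy]
  abel

/-- The symmetric product, seen as valued in the left center. -/
def spZ (a b : L) : A.leftCenter := ⟨A.sp a b, A.sp_mem a b⟩

lemma br_mem (e : L) (f : A.leftCenter) : A.br e (f : L) ∈ A.leftCenter := by
  rw [mem_leftCenter_iff]
  intro e'
  have h := A.leibniz e (f : L) e'
  have hf : A.br (f : L) e' = 0 := (A.mem_leftCenter_iff.mp f.2) e'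
  have hf2 : A.br (f : L) (A.br e e') = 0 := (A.mem_leftCenter_iff.mp f.2) _
  rw [hf] at h
  rw [map_zero] at h
  rw [hf2, add_zero] at h
  exact h.symm

/-- The bracket of `L` on its left center. -/
def brZ (e : L) (f : A.leftCenter) : A.leftCenter := ⟨A.br e (f : L), A.br_mem e f⟩

/-- The symmetric product as a bilinear map into the left center. -/
noncomputable def spL : L →ₗ[𝕜] L →ₗ[𝕜] A.leftCenter :=
  LinearMap.mk₂ 𝕜 A.spZ
    (fun a a' b => Subtype.ext (by
      simp only [spZ, sp, map_add, LinearMap.add_apply, Submodule.coe_add]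
      abel))
    (fun c a b => Subtype.ext (by
      simp only [spZ, sp, map_smul, LinearMap.smul_apply, SetLike.val_smul, smul_add]))
    (fun a b b' => Subtype.ext (by
      simp only [spZ, sp, map_add, LinearMap.add_apply, Submodule.coe_add]
      abel))
    (fun c a b => Subtype.ext (by
      simp only [spZ, sp, map_smul, LinearMap.smul_apply, SetLike.val_smul, smul_add]))

end LeibnizAlg

/-- `(S, ι)` is (a model of) the symmetric algebra of the module `Z`:
it satisfies the universal property. -/
def IsSymAlg {𝕜 : Type u} [Field 𝕜] {Z : Type v} [AddCommGroup Z] [Module 𝕜 Z]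
    (S : Type w) [CommRing S] [Algebra 𝕜 S] (ι : Z →ₗ[𝕜] S) : Prop :=
  ∀ (B : Type (max u v w)) [CommRing B] [Algebra 𝕜 B] (g : Z →ₗ[𝕜] B),
    ∃! h : S →ₐ[𝕜] B, ∀ z : Z, h (ι z) = g z

section Shuffles

/-- All ways of splitting a list into a signed pair of complementary subsequences. -/
def shSplits {α : Type*} : List α → List (ℤ × List α × List α)
  | [] => [(1, [], [])]
  | a :: l =>
      ((shSplits l).map fun t => (t.1, a :: t.2.1, t.2.2)) ++
      ((shSplits l).map fun t => ((-1) ^ t.2.1.length * t.1, t.2.1, a :: t.2.2))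

/-- Signed sum over all `(p, l.length - p)`-shuffles of the list `l`. -/
def shSum {α : Type*} {S : Type*} [AddCommGroup S] (p : ℕ) (l : List α)
    (F : List α → List α → S) : S :=
  (((shSplits l).filter fun t => t.2.1.length == p).map fun t => t.1 • F t.2.1 t.2.2).sum

/-- Unsigned sum over all `(p, l.length - p)`-shuffles of the list `l`. -/
def shSumU {α : Type*} {S : Type*} [AddCommMonoid S] (p : ℕ) (l : List α)
    (F : List α → List α → S) : S :=
  (((shSplits l).filter fun t => t.2.1.length == p).map fun t => F t.2.1 t.2.2).sum

end Shuffles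

section Cochains

variable {𝕜 : Type u} [Field 𝕜] {L : Type v} [AddCommGroup L] [Module 𝕜 L]
variable (A : LeibnizAlg 𝕜 L)
variable (S : Type w) [CommRing S] [Algebra 𝕜 S]
variable (ι : A.leftCenter →ₗ[𝕜] S)

/-- `ω` is an `n`-cochain in the standard complex `C(L) = C(L, Z, S^•(Z))`:
its component `ω k`, defined on tuples `es` of `n - 2k` elements of `L` and `k`
elements of the left center, is multilinear, symmetric in the `Z`-arguments, and
weakly skew-symmetric in the `L`-arguments. -/
structure IsCochain (n : ℕ) (ω : ℕ → List L → List A.leftCenter → S) : Prop where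
  add_e : ∀ (k : ℕ) (p q : List L) (x y : L) (fs : List A.leftCenter),
    2*k + (p.length + 1 + q.length) = n → fs.length = k →
    ω k (p ++ (x + y) :: q) fs = ω k (p ++ x :: q) fs + ω k (p ++ y :: q) fs
  smul_e : ∀ (k : ℕ) (p q : List L) (c : 𝕜) (x : L) (fs : List A.leftCenter),
    2*k + (p.length + 1 + q.length) = n → fs.length = k →
    ω k (p ++ (c • x) :: q) fs = c • ω k (p ++ x :: q) fs
  add_f : ∀ (k : ℕ) (es : List L) (p q : List A.leftCenter) (x y : A.leftCenter),
    2*k + es.length = n → p.length + 1 + q.length = k →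
    ω k es (p ++ (x + y) :: q) = ω k es (p ++ x :: q) + ω k es (p ++ y :: q)
  smul_f : ∀ (k : ℕ) (es : List L) (p q : List A.leftCenter) (c : 𝕜) (x : A.leftCenter),
    2*k + es.length = n → p.length + 1 + q.length = k →
    ω k es (p ++ (c • x) :: q) = c • ω k es (p ++ x :: q)
  symm_f : ∀ (k : ℕ) (es : List L) (p q : List A.leftCenter) (x y : A.leftCenter),
    2*k + es.length = n → p.length + 2 + q.length = k →
    ω k es (p ++ x :: y :: q) = ω k es (p ++ y :: x :: q)
  skew : ∀ (k : ℕ) (p q : List L) (x y : L) (fs : List A.leftCenter),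
    2*k + (p.length + 2 + q.length) = n → fs.length = k →
    ω k (p ++ x :: y :: q) fs + ω k (p ++ y :: x :: q) fs
      = - ω (k+1) (p ++ q) (A.spZ x y :: fs)

/-- The product of an `n`-cochain and an `m`-cochain. -/
def cmul (n m : ℕ) (ω η : ℕ → List L → List A.leftCenter → S) :
    ℕ → List L → List A.leftCenter → S :=
  fun k es fs => ∑ i ∈ Finset.range (k+1),
    if 2*i ≤ n ∧ 2*(k-i) ≤ m then
      shSum (n - 2*i) es fun es₁ es₂ =>
        shSumU i fs fun fs₁ fs₂ => ω i es₁ fs₁ * η (k-i) es₂ fs₂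
    else 0

/-- The operator `d₀` of the standard complex, where `ρ` is the action of `L` on
`S^•(Z)` by derivations. -/
def cd0 (ρ : L → Derivation 𝕜 S S) (ω : ℕ → List L → List A.leftCenter → S) :
    ℕ → List L → List A.leftCenter → S :=
  fun k es fs =>
    (∑ a ∈ Finset.range es.length,
      (-1 : ℤ)^a • ρ (es.getD a 0) (ω k (es.eraseIdx a) fs))
    + ∑ a ∈ Finset.range es.length, ∑ b ∈ Finset.Ico (a+1) es.length,
        (-1 : ℤ)^(a+1) •
          ω k ((es.eraseIdx a).set (b-1) (A.br (es.getD a 0) (es.getD b 0))) fs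

/-- The operator `δ` of the standard complex. -/
def cdel (ω : ℕ → List L → List A.leftCenter → S) :
    ℕ → List L → List A.leftCenter → S :=
  fun k es fs => ∑ j ∈ Finset.range fs.length,
    ω (k-1) (((fs.getD j 0 : A.leftCenter) : L) :: es) (fs.eraseIdx j)

/-- The symmetric product with values pushed into `S = S^•(Z)`. -/
noncomputable def spS : L →ₗ[𝕜] L →ₗ[𝕜] S := (A.spL).compr₂ ι

/-- The `S^•(Z)`-bilinear extension of the symmetric product to `S^•(Z) ⊗ L`. -/
noncomputable def pairT : (S ⊗[𝕜] L) →ₗ[𝕜] (S ⊗[𝕜] L) →ₗ[𝕜] S :=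
  TensorProduct.curry <|
    (TensorProduct.lift (LinearMap.mul 𝕜 S)).comp <|
      (TensorProduct.map (TensorProduct.lift (LinearMap.mul 𝕜 S))
        (TensorProduct.lift (spS A S ι))).comp
        (TensorProduct.tensorTensorTensorComm 𝕜 S L S L).toLinearMap

/-- `ω` is a representable `n`-cochain: each of the maps
`e ↦ ω k (es ++ [e]) fs` lies in the image of `φ = pairT`. -/
def IsRepr (n : ℕ) (ω : ℕ → List L → List A.leftCenter → S) : Prop :=
  ∀ (k : ℕ) (es : List L) (fs : List A.leftCenter),
    2*k + (es.length + 1) = n → fs.length = k →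
    ∃ x : S ⊗[𝕜] L, ∀ e : L, pairT A S ι x ((1 : S) ⊗ₜ[𝕜] e) = ω k (es ++ [e]) fs

/-- `ωt` is a choice of `φ`-preimages `ω̃` for the representable cochain `ω`. -/
def IsPre (n : ℕ) (ω : ℕ → List L → List A.leftCenter → S)
    (ωt : ℕ → List L → List A.leftCenter → S ⊗[𝕜] L) : Prop :=
  ∀ (k : ℕ) (es : List L) (fs : List A.leftCenter),
    2*k + (es.length + 1) = n → fs.length = k →
    ∀ e : L, pairT A S ι (ωt k es fs) ((1 : S) ⊗ₜ[𝕜] e) = ω k (es ++ [e]) fs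

/-- `ωc k es x fs` is the extension `ω̌` of `ω (k+1) es (·::fs)` from `Z` to all of
`S = S^•(Z)` in its first `Z`-slot, by the Leibniz rule. -/
structure IsExt (n : ℕ) (ω : ℕ → List L → List A.leftCenter → S)
    (ωc : ℕ → List L → S → List A.leftCenter → S) : Prop where
  on_gen : ∀ (k : ℕ) (es : List L) (fs : List A.leftCenter) (f : A.leftCenter),
    2*(k+1) + es.length = n → fs.length = k →
    ωc k es (ι f) fs = ω (k+1) es (f :: fs)
  map_add : ∀ (k : ℕ) (es : List L) (fs : List A.leftCenter) (x y : S),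
    2*(k+1) + es.length = n → fs.length = k →
    ωc k es (x + y) fs = ωc k es x fs + ωc k es y fs
  map_smul : ∀ (k : ℕ) (es : List L) (fs : List A.leftCenter) (c : 𝕜) (x : S),
    2*(k+1) + es.length = n → fs.length = k →
    ωc k es (c • x) fs = c • ωc k es x fs
  mul_rule : ∀ (k : ℕ) (es : List L) (fs : List A.leftCenter) (x y : S),
    2*(k+1) + es.length = n → fs.length = k →
    ωc k es (x * y) fs = x * ωc k es y fs + y * ωc k es x fs

/-- The operation `ω ◇ η` built from the Leibniz-rule extension `ωc` of `ω`. -/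
def cdiam (n m : ℕ) (ωc : ℕ → List L → S → List A.leftCenter → S)
    (η : ℕ → List L → List A.leftCenter → S) : ℕ → List L → List A.leftCenter → S :=
  fun k es fs => ∑ i ∈ Finset.range (k+1),
    if 2*(i+1) ≤ n ∧ 2*(k-i) ≤ m then
      shSum (n - 2*i - 2) es fun es₁ es₂ =>
        shSumU (k-i) fs fun fs₁ fs₂ => ωc i es₁ (η (k-i) es₂ fs₁) fs₂
    else 0

/-- The operation `ω • η` built from chosen `φ`-preimages `ωt`, `ηt`. -/
noncomputable def cbull (n m : ℕ)
    (ωt ηt : ℕ → List L → List A.leftCenter → S ⊗[𝕜] L) :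
    ℕ → List L → List A.leftCenter → S :=
  fun k es fs => (-1 : ℤ)^(m-1) • ∑ i ∈ Finset.range (k+1),
    if 2*i + 1 ≤ n ∧ 2*(k-i) + 1 ≤ m then
      shSum (n - 2*i - 1) es fun es₁ es₂ =>
        shSumU i fs fun fs₁ fs₂ => pairT A S ι (ωt i es₁ fs₁) (ηt (k-i) es₂ fs₂)
    else 0

/-- The bracket `{ω, η} = ω•η + ω◇η − (−1)^{nm} η◇ω` of representable cochains. -/
noncomputable def cpbr (n m : ℕ)
    (ω η : ℕ → List L → List A.leftCenter → S)
    (ωt ηt : ℕ → List L → List A.leftCenter → S ⊗[𝕜] L)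
    (ωc ηc : ℕ → List L → S → List A.leftCenter → S) :
    ℕ → List L → List A.leftCenter → S :=
  fun k es fs => cbull A S ι n m ωt ηt k es fs + cdiam A S n m ωc η k es fs
    - (-1 : ℤ)^(n*m) • cdiam A S m n ηc ω k es fs

/-- The canonical 3-cochain `Θ`. -/
def ThetaC : ℕ → List L → List A.leftCenter → S :=
  fun k es fs => match k, es, fs with
    | 0, [e₁, e₂, e₃], [] => ι (A.spZ (A.br e₁ e₂) e₃)
    | 1, [e], [f] => - ι (A.spZ e (f : L))
    | _, _, _ => 0

/-- The 2-cochain `ζ` with `ζ₀ = (·,·)` and `ζ₁(f) = −2f`. -/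
def zetaC : ℕ → List L → List A.leftCenter → S :=
  fun k es fs => match k, es, fs with
    | 0, [e₁, e₂], [] => ι (A.spZ e₁ e₂)
    | 1, [], [f] => (-2 : 𝕜) • ι f
    | _, _, _ => 0

/-- The representable 1-cochain `e^♭ = (e, ·)`. -/
def eflat (e : L) : ℕ → List L → List A.leftCenter → S :=
  fun k es fs => match k, es, fs with
    | 0, [e'], [] => ι (A.spZ e e')
    | _, _, _ => 0

end Cochains


section CdelAux

variable {α : Type*} {S : Type*}

lemma cdelAux_list_sum_map_add [AddCommMonoid S] (l : List α) (f g : α → S) :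
    (l.map fun t => f t + g t).sum = (l.map f).sum + (l.map g).sum := by
  induction l with
  | nil => simp
  | cons a t ih => simp [ih]; abel

lemma cdelAux_list_sum_map_finsum [AddCommMonoid S] {ι : Type*} (l : List α) (s : Finset ι)
    (f : ι → α → S) :
    (l.map fun t => ∑ j ∈ s, f j t).sum = ∑ j ∈ s, (l.map fun t => f j t).sum := by
  induction l with
  | nil => simp
  | cons a t ih => simp [ih, Finset.sum_add_distrib]

lemma shSplits_length (l : List α) :
    ∀ t ∈ shSplits l, t.2.1.length + t.2.2.length = l.length := by
  induction l with
  | nil =>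
    intro t ht
    simp only [shSplits, List.mem_singleton] at ht
    subst ht; simp
  | cons a tl ih =>
    intro t ht
    simp only [shSplits, List.mem_append, List.mem_map] at ht
    rcases ht with ⟨u, hu, rfl⟩ | ⟨u, hu, rfl⟩ <;>
      · have := ih u hu; simp only [List.length_cons]; omega

lemma shSum_congr [AddCommGroup S] (p : ℕ) (l : List α) (F F' : List α → List α → S)
    (h : ∀ l₁ l₂, l₁.length = p → l₁.length + l₂.length = l.length → F l₁ l₂ = F' l₁ l₂) :
    shSum p l F = shSum p l F' := by
  unfold shSum
  congr 1
  apply List.map_congr_left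
  intro t ht
  rw [List.mem_filter] at ht
  have h1 := shSplits_length l t ht.1
  have h2 : t.2.1.length = p := by simpa using ht.2
  rw [h t.2.1 t.2.2 h2 h1]

lemma shSumU_congr [AddCommMonoid S] (p : ℕ) (l : List α) (F F' : List α → List α → S)
    (h : ∀ l₁ l₂, l₁.length = p → l₁.length + l₂.length = l.length → F l₁ l₂ = F' l₁ l₂) :
    shSumU p l F = shSumU p l F' := by
  unfold shSumU
  congr 1
  apply List.map_congr_left
  intro t ht
  rw [List.mem_filter] at ht
  have h1 := shSplits_length l t ht.1
  have h2 : t.2.1.length = p := by simpa using ht.2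
  rw [h t.2.1 t.2.2 h2 h1]

lemma shSum_zero_fn [AddCommGroup S] (p : ℕ) (l : List α) :
    shSum p l (fun _ _ => (0 : S)) = 0 := by
  simp [shSum]

lemma shSumU_zero_fn [AddCommMonoid S] (p : ℕ) (l : List α) :
    shSumU p l (fun _ _ => (0 : S)) = 0 := by
  simp [shSumU]

lemma shSum_finsum [AddCommGroup S] {ι : Type*} (p : ℕ) (l : List α) (s : Finset ι)
    (F : ι → List α → List α → S) :
    shSum p l (fun a b => ∑ j ∈ s, F j a b) = ∑ j ∈ s, shSum p l (F j) := by
  unfold shSum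
  rw [← cdelAux_list_sum_map_finsum]
  congr 1
  apply List.map_congr_left
  intro t _
  rw [Finset.smul_sum]

lemma shSumU_finsum [AddCommMonoid S] {ι : Type*} (p : ℕ) (l : List α) (s : Finset ι)
    (F : ι → List α → List α → S) :
    shSumU p l (fun a b => ∑ j ∈ s, F j a b) = ∑ j ∈ s, shSumU p l (F j) := by
  unfold shSumU
  rw [← cdelAux_list_sum_map_finsum]

lemma shSumU_add [AddCommMonoid S] (p : ℕ) (l : List α) (F G : List α → List α → S) :
    shSumU p l (fun a b => F a b + G a b) = shSumU p l F + shSumU p l G := by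
  unfold shSumU
  rw [← cdelAux_list_sum_map_add]

lemma shSum_eq_zero_of_lt [AddCommGroup S] (p : ℕ) (l : List α) (F : List α → List α → S)
    (h : l.length < p) : shSum p l F = 0 := by
  unfold shSum
  have hnil : (shSplits l).filter (fun t => t.2.1.length == p) = [] := by
    apply List.filter_eq_nil_iff.mpr
    intro t ht
    have := shSplits_length l t ht
    simp only [beq_iff_eq]
    omega
  rw [hnil]; simp

lemma shSumU_cons [AddCommMonoid S] (p : ℕ) (a : α) (l : List α) (F : List α → List α → S) :
    shSumU p (a :: l) F =
      (if p = 0 then 0 else shSumU (p-1) l (fun l₁ l₂ => F (a::l₁) l₂))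
        + shSumU p l (fun l₁ l₂ => F l₁ (a::l₂)) := by
  unfold shSumU
  rw [shSplits, List.filter_append, List.map_append, List.sum_append]
  congr 1
  · rw [List.filter_map, List.map_map]
    cases p with
    | zero =>
      rw [if_pos rfl]
      have h0 : List.filter ((fun t => t.2.1.length == 0) ∘
          (fun (t : ℤ × List α × List α) => (t.1, a :: t.2.1, t.2.2))) (shSplits l) = [] := by
        apply List.filter_eq_nil_iff.mpr
        intro t _
        simp [Function.comp]
      rw [h0]; simp
    | succ q =>
      rw [if_neg (Nat.succ_ne_zero q)]
      have h1 : List.filter ((fun t => t.2.1.length == q + 1) ∘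
          (fun (t : ℤ × List α × List α) => (t.1, a :: t.2.1, t.2.2))) (shSplits l)
          = List.filter (fun t => t.2.1.length == q) (shSplits l) := by
        apply List.filter_congr
        intro t _
        simp [Function.comp]
      rw [h1]
      rfl
  · rw [List.filter_map, List.map_map]
    rfl

lemma shSum_cons [AddCommGroup S] (p : ℕ) (a : α) (l : List α) (F : List α → List α → S) :
    shSum p (a :: l) F =
      (if p = 0 then 0 else shSum (p-1) l (fun l₁ l₂ => F (a::l₁) l₂))
        + ((-1:ℤ)^p) • shSum p l (fun l₁ l₂ => F l₁ (a::l₂)) := by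
  unfold shSum
  rw [shSplits, List.filter_append, List.map_append, List.sum_append]
  congr 1
  · rw [List.filter_map, List.map_map]
    cases p with
    | zero =>
      rw [if_pos rfl]
      have h0 : List.filter ((fun t => t.2.1.length == 0) ∘
          (fun (t : ℤ × List α × List α) => (t.1, a :: t.2.1, t.2.2))) (shSplits l) = [] := by
        apply List.filter_eq_nil_iff.mpr
        intro t _
        simp [Function.comp]
      rw [h0]; simp
    | succ q =>
      rw [if_neg (Nat.succ_ne_zero q)]
      have h1 : List.filter ((fun t => t.2.1.length == q + 1) ∘
          (fun (t : ℤ × List α × List α) => (t.1, a :: t.2.1, t.2.2))) (shSplits l)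
          = List.filter (fun t => t.2.1.length == q) (shSplits l) := by
        apply List.filter_congr
        intro t _
        simp [Function.comp]
      rw [h1]
      rfl
  · rw [List.filter_map, List.map_map]
    rw [List.smul_sum, List.map_map]
    apply congrArg List.sum
    apply List.map_congr_left
    intro t ht
    rw [List.mem_filter] at ht
    have h2 : t.2.1.length = p := by simpa using ht.2
    simp only [Function.comp]
    rw [h2, mul_smul]

lemma shSumU_nil_succ [AddCommMonoid S] (p : ℕ) (F : List α → List α → S) :
    shSumU (p+1) [] F = 0 := by
  simp [shSumU, shSplits]

lemma shSumU_nil_zero [AddCommMonoid S] (F : List α → List α → S) :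
    shSumU 0 [] F = F [] [] := by
  simp [shSumU, shSplits]

lemma cdelAux_sum_if_zero {ι : Type*} [AddCommMonoid S] (s : Finset ι) (c : Prop)
    [Decidable c] (f : ι → S) :
    ∑ j ∈ s, (if c then 0 else f j) = if c then 0 else ∑ j ∈ s, f j := by
  split <;> simp

lemma shSumU_pull_left [AddCommMonoid S] (p : ℕ) (l : List α) (d : α)
    (G : α → List α → List α → S) :
    ∑ j ∈ Finset.range l.length, shSumU p (l.eraseIdx j) (G (l.getD j d))
      = shSumU (p+1) l (fun l₁ l₂ => ∑ j ∈ Finset.range l₁.length,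
          G (l₁.getD j d) (l₁.eraseIdx j) l₂) := by
  induction l generalizing p G with
  | nil => simp [shSumU_nil_succ]
  | cons a t ih =>
    rw [List.length_cons, Finset.sum_range_succ']
    simp only [List.eraseIdx_cons_succ, List.getD_cons_succ, List.eraseIdx_cons_zero,
      List.getD_cons_zero]
    have step1 : ∀ j ∈ Finset.range t.length, shSumU p (a :: t.eraseIdx j) (G (t.getD j d))
        = (if p = 0 then 0 else shSumU (p-1) (t.eraseIdx j)
            (fun l₁ l₂ => G (t.getD j d) (a::l₁) l₂))
          + shSumU p (t.eraseIdx j) (fun l₁ l₂ => G (t.getD j d) l₁ (a::l₂)) :=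
      fun j _ => shSumU_cons p a (t.eraseIdx j) (G (t.getD j d))
    rw [Finset.sum_congr rfl step1, Finset.sum_add_distrib, cdelAux_sum_if_zero]
    rw [shSumU_cons (p+1) a t, if_neg (Nat.succ_ne_zero p)]
    simp only [Nat.add_sub_cancel]
    have hphi : ∀ (l₁ l₂ : List α), (∑ j ∈ Finset.range (a :: l₁).length,
          G ((a :: l₁).getD j d) ((a :: l₁).eraseIdx j) l₂)
        = (∑ j ∈ Finset.range l₁.length, G (l₁.getD j d) (a :: l₁.eraseIdx j) l₂)
          + G a l₁ l₂ := by
      intro l₁ l₂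
      rw [List.length_cons, Finset.sum_range_succ']
      simp only [List.eraseIdx_cons_succ, List.getD_cons_succ, List.eraseIdx_cons_zero,
        List.getD_cons_zero]
    have hexp : shSumU p t (fun l₁ l₂ => ∑ j ∈ Finset.range (a :: l₁).length,
          G ((a :: l₁).getD j d) ((a :: l₁).eraseIdx j) l₂)
        = shSumU p t (fun l₁ l₂ => ∑ j ∈ Finset.range l₁.length,
            G (l₁.getD j d) (a :: l₁.eraseIdx j) l₂)
          + shSumU p t (fun l₁ l₂ => G a l₁ l₂) := by
      rw [← shSumU_add]
      exact shSumU_congr _ _ _ _ (fun l₁ l₂ _ _ => hphi l₁ l₂)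
    rw [hexp]
    rw [ih p (fun f l₁ l₂ => G f l₁ (a :: l₂))]
    have h3 : (if p = 0 then (0:S) else ∑ j ∈ Finset.range t.length,
          shSumU (p-1) (t.eraseIdx j) (fun l₁ l₂ => G (t.getD j d) (a::l₁) l₂))
        = shSumU p t (fun l₁ l₂ => ∑ j ∈ Finset.range l₁.length,
            G (l₁.getD j d) (a :: l₁.eraseIdx j) l₂) := by
      cases p with
      | zero =>
        rw [if_pos rfl]
        rw [shSumU_congr 0 t _ (fun _ _ => (0 : S))
          (fun l₁ l₂ h _ => by rw [h]; simp), shSumU_zero_fn]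
      | succ q =>
        rw [if_neg (Nat.succ_ne_zero q)]
        exact ih q (fun f l₁ l₂ => G f (a :: l₁) l₂)
    rw [h3]
    abel

lemma shSumU_pull_right [AddCommMonoid S] (p : ℕ) (l : List α) (d : α)
    (H : α → List α → List α → S) :
    ∑ j ∈ Finset.range l.length, shSumU p (l.eraseIdx j) (H (l.getD j d))
      = shSumU p l (fun l₁ l₂ => ∑ j ∈ Finset.range l₂.length,
          H (l₂.getD j d) l₁ (l₂.eraseIdx j)) := by
  induction l generalizing p H with
  | nil =>
    cases p with
    | zero => simp [shSumU_nil_zero]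
    | succ q => simp [shSumU_nil_succ]
  | cons a t ih =>
    rw [List.length_cons, Finset.sum_range_succ']
    simp only [List.eraseIdx_cons_succ, List.getD_cons_succ, List.eraseIdx_cons_zero,
      List.getD_cons_zero]
    have step1 : ∀ j ∈ Finset.range t.length, shSumU p (a :: t.eraseIdx j) (H (t.getD j d))
        = (if p = 0 then 0 else shSumU (p-1) (t.eraseIdx j)
            (fun l₁ l₂ => H (t.getD j d) (a::l₁) l₂))
          + shSumU p (t.eraseIdx j) (fun l₁ l₂ => H (t.getD j d) l₁ (a::l₂)) :=
      fun j _ => shSumU_cons p a (t.eraseIdx j) (H (t.getD j d))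
    rw [Finset.sum_congr rfl step1, Finset.sum_add_distrib, cdelAux_sum_if_zero]
    rw [shSumU_cons p a t]
    have hpsi : ∀ (l₁ l₂ : List α), (∑ j ∈ Finset.range (a :: l₂).length,
          H ((a :: l₂).getD j d) l₁ ((a :: l₂).eraseIdx j))
        = (∑ j ∈ Finset.range l₂.length, H (l₂.getD j d) l₁ (a :: l₂.eraseIdx j))
          + H a l₁ l₂ := by
      intro l₁ l₂
      rw [List.length_cons, Finset.sum_range_succ']
      simp only [List.eraseIdx_cons_succ, List.getD_cons_succ, List.eraseIdx_cons_zero,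
        List.getD_cons_zero]
    have hexp : shSumU p t (fun l₁ l₂ => ∑ j ∈ Finset.range (a :: l₂).length,
          H ((a :: l₂).getD j d) l₁ ((a :: l₂).eraseIdx j))
        = shSumU p t (fun l₁ l₂ => ∑ j ∈ Finset.range l₂.length,
            H (l₂.getD j d) l₁ (a :: l₂.eraseIdx j))
          + shSumU p t (fun l₁ l₂ => H a l₁ l₂) := by
      rw [← shSumU_add]
      exact shSumU_congr _ _ _ _ (fun l₁ l₂ _ _ => hpsi l₁ l₂)
    rw [hexp]
    rw [ih p (fun f l₁ l₂ => H f l₁ (a :: l₂))]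
    have h3 : (if p = 0 then (0:S) else ∑ j ∈ Finset.range t.length,
          shSumU (p-1) (t.eraseIdx j) (fun l₁ l₂ => H (t.getD j d) (a::l₁) l₂))
        = if p = 0 then (0:S) else shSumU (p-1) t
            (fun l₁ l₂ => ∑ j ∈ Finset.range l₂.length,
              H (l₂.getD j d) (a :: l₁) (l₂.eraseIdx j)) := by
      cases p with
      | zero => rfl
      | succ q =>
        rw [if_neg (Nat.succ_ne_zero q), if_neg (Nat.succ_ne_zero q)]
        exact ih q (fun f l₁ l₂ => H f (a :: l₁) l₂)
    rw [h3]
    abel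

lemma cdelAux_neg_one_pow (n i : ℕ) (h : 2*i ≤ n) : ((-1:ℤ))^(n-2*i) = (-1:ℤ)^n := by
  conv_rhs => rw [show n = (n - 2*i) + 2*i from by omega]
  rw [pow_add, pow_mul]
  norm_num

end CdelAux

section Theorems

variable {𝕜 : Type u} [Field 𝕜] {L : Type v} [AddCommGroup L] [Module 𝕜 L]

theorem cdel_derivation (A : LeibnizAlg 𝕜 L) (S : Type w) [CommRing S] [Algebra 𝕜 S]
    (ι : A.leftCenter →ₗ[𝕜] S) (hS : IsSymAlg S ι)
    (n m : ℕ) (ω η : ℕ → List L → List A.leftCenter → S)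
    (hω : IsCochain A S n ω) (hη : IsCochain A S m η) :
    ∀ (k : ℕ) (es : List L) (fs : List A.leftCenter),
      2*k + es.length = n + m + 1 → fs.length = k →
      cdel A S (cmul A S n m ω η) k es fs
        = cmul A S (n+1) m (cdel A S ω) η k es fs
          + (-1 : ℤ)^n • cmul A S n (m+1) ω (cdel A S η) k es fs := by
  intro k es fs hdeg hlen
  cases k with
  | zero =>
    have hfs : fs = [] := List.length_eq_zero_iff.mp hlen
    subst hfs
    have h1 : cdel A S (cmul A S n m ω η) 0 es [] = 0 := by simp [cdel]
    have h2 : cmul A S (n+1) m (cdel A S ω) η 0 es [] = 0 := by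
      simp only [cmul, zero_add, Finset.sum_range_one]
      have hz : shSum (n+1-2*0) es (fun es₁ es₂ => shSumU 0 ([] : List A.leftCenter)
          (fun f₁ f₂ => cdel A S ω 0 es₁ f₁ * η (0-0) es₂ f₂)) = 0 := by
        rw [shSum_congr _ _ _ (fun _ _ => (0:S)) (fun es₁ es₂ _ _ => by
          rw [shSumU_nil_zero]; simp [cdel]), shSum_zero_fn]
      rw [hz]; simp
    have h3 : cmul A S n (m+1) ω (cdel A S η) 0 es [] = 0 := by
      simp only [cmul, zero_add, Finset.sum_range_one]
      have hz : shSum (n-2*0) es (fun es₁ es₂ => shSumU 0 ([] : List A.leftCenter)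
          (fun f₁ f₂ => ω 0 es₁ f₁ * cdel A S η (0-0) es₂ f₂)) = 0 := by
        rw [shSum_congr _ _ _ (fun _ _ => (0:S)) (fun es₁ es₂ _ _ => by
          rw [shSumU_nil_zero]; simp [cdel]), shSum_zero_fn]
      rw [hz]; simp
    rw [h1, h2, h3]; simp
  | succ k' =>
    have hL : cdel A S (cmul A S n m ω η) (k'+1) es fs
        = ∑ i ∈ Finset.range (k'+1), ∑ j ∈ Finset.range fs.length,
            (if 2*i ≤ n ∧ 2*(k'-i) ≤ m then
              shSum (n-2*i) (((fs.getD j 0 : A.leftCenter) : L) :: es)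
                (fun es₁ es₂ => shSumU i (fs.eraseIdx j)
                  (fun fs₁ fs₂ => ω i es₁ fs₁ * η (k'-i) es₂ fs₂))
            else 0) := by
      simp only [cdel, cmul, Nat.add_sub_cancel]
      exact Finset.sum_comm
    have claim1 : ∀ i ∈ Finset.range (k'+1),
        (∑ j ∈ Finset.range fs.length, (if 2*i ≤ n ∧ 2*(k'-i) ≤ m then
            shSum (n-2*i) (((fs.getD j 0 : A.leftCenter) : L) :: es)
              (fun es₁ es₂ => shSumU i (fs.eraseIdx j)
                (fun fs₁ fs₂ => ω i es₁ fs₁ * η (k'-i) es₂ fs₂))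
          else 0))
        = (if 2*i ≤ n ∧ 2*(k'-i) ≤ m ∧ ¬ (n-2*i = 0) then
             shSum (n-2*i-1) es (fun es₁ es₂ => shSumU (i+1) fs
               (fun fs₁ fs₂ => cdel A S ω (i+1) es₁ fs₁ * η (k'-i) es₂ fs₂))
           else 0)
          + (-1:ℤ)^n • (if 2*i ≤ n ∧ 2*(k'-i) ≤ m then
             shSum (n-2*i) es (fun es₁ es₂ => shSumU i fs
               (fun fs₁ fs₂ => ω i es₁ fs₁ * cdel A S η (k'+1-i) es₂ fs₂))
           else 0) := by
      intro i _
      by_cases hc : 2*i ≤ n ∧ 2*(k'-i) ≤ m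
      case neg =>
        have hc2 : ¬ (2*i ≤ n ∧ 2*(k'-i) ≤ m ∧ ¬ (n-2*i = 0)) :=
          fun h => hc ⟨h.1, h.2.1⟩
        simp only [if_neg hc, if_neg hc2, Finset.sum_const_zero, smul_zero, add_zero]
      case pos =>
        simp only [if_pos hc]
        rw [Finset.sum_congr rfl (fun j _ => shSum_cons (n-2*i)
          (((fs.getD j 0 : A.leftCenter) : L)) es
          (fun es₁ es₂ => shSumU i (fs.eraseIdx j)
            (fun fs₁ fs₂ => ω i es₁ fs₁ * η (k'-i) es₂ fs₂)))]
        rw [Finset.sum_add_distrib, cdelAux_sum_if_zero]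
        congr 1
        · by_cases hz : n - 2*i = 0
          · rw [if_pos hz, if_neg (fun h => h.2.2 hz)]
          · rw [if_neg hz, if_pos ⟨hc.1, hc.2, hz⟩]
            rw [← shSum_finsum]
            apply shSum_congr
            intro es₁ es₂ _ _
            have hp := shSumU_pull_left (S := S) i fs (0 : A.leftCenter)
              (fun f fs₁ fs₂ => ω i ((f : L) :: es₁) fs₁ * η (k'-i) es₂ fs₂)
            rw [hp]
            apply shSumU_congr
            intro fs₁ fs₂ _ _
            rw [← Finset.sum_mul]
            rfl
        · simp only [cdelAux_neg_one_pow n i hc.1]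
          rw [← Finset.smul_sum]
          congr 1
          rw [← shSum_finsum]
          apply shSum_congr
          intro es₁ es₂ _ _
          have hp := shSumU_pull_right (S := S) i fs (0 : A.leftCenter)
            (fun f fs₁ fs₂ => ω i es₁ fs₁ * η (k'-i) ((f : L) :: es₂) fs₂)
          rw [hp]
          apply shSumU_congr
          intro fs₁ fs₂ _ _
          rw [← Finset.mul_sum]
          congr 1
          have e3 : k'+1-i-1 = k'-i := by omega
          simp only [cdel, e3]
    have claim2 : cmul A S (n+1) m (cdel A S ω) η (k'+1) es fs
        = ∑ i ∈ Finset.range (k'+1),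
            (if 2*i ≤ n ∧ 2*(k'-i) ≤ m ∧ ¬ (n-2*i = 0) then
               shSum (n-2*i-1) es (fun es₁ es₂ => shSumU (i+1) fs
                 (fun fs₁ fs₂ => cdel A S ω (i+1) es₁ fs₁ * η (k'-i) es₂ fs₂))
             else 0) := by
      simp only [cmul]
      rw [Finset.sum_range_succ']
      have hT0 : (if 2*0 ≤ n+1 ∧ 2*(k'+1-0) ≤ m then
          shSum (n+1-2*0) es (fun es₁ es₂ => shSumU 0 fs
            (fun f₁ f₂ => cdel A S ω 0 es₁ f₁ * η (k'+1-0) es₂ f₂)) else 0) = 0 := by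
        have hz : shSum (n+1-2*0) es (fun es₁ es₂ => shSumU 0 fs
            (fun f₁ f₂ => cdel A S ω 0 es₁ f₁ * η (k'+1-0) es₂ f₂)) = 0 := by
          rw [shSum_congr _ _ _ (fun _ _ => (0:S)) (fun es₁ es₂ _ _ => by
            rw [shSumU_congr _ _ _ (fun _ _ => (0:S)) (fun fs₁ fs₂ h1 _ => by
              simp [cdel, h1]), shSumU_zero_fn]), shSum_zero_fn]
        rw [hz]; simp
      rw [hT0, add_zero]
      apply Finset.sum_congr rfl
      intro i _
      have e1 : n+1-2*(i+1) = n-2*i-1 := by omega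
      have e2 : k'+1-(i+1) = k'-i := by omega
      rw [e1, e2]
      exact if_congr (by omega) rfl rfl
    have claim3 : cmul A S n (m+1) ω (cdel A S η) (k'+1) es fs
        = ∑ i ∈ Finset.range (k'+1),
            (if 2*i ≤ n ∧ 2*(k'-i) ≤ m then
               shSum (n-2*i) es (fun es₁ es₂ => shSumU i fs
                 (fun fs₁ fs₂ => ω i es₁ fs₁ * cdel A S η (k'+1-i) es₂ fs₂))
             else 0) := by
      simp only [cmul]
      rw [Finset.sum_range_succ]
      have hTl : (if 2*(k'+1) ≤ n ∧ 2*(k'+1-(k'+1)) ≤ m+1 then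
          shSum (n-2*(k'+1)) es (fun es₁ es₂ => shSumU (k'+1) fs
            (fun f₁ f₂ => ω (k'+1) es₁ f₁ * cdel A S η (k'+1-(k'+1)) es₂ f₂)) else 0) = 0 := by
        have hz : shSum (n-2*(k'+1)) es (fun es₁ es₂ => shSumU (k'+1) fs
            (fun f₁ f₂ => ω (k'+1) es₁ f₁ * cdel A S η (k'+1-(k'+1)) es₂ f₂)) = 0 := by
          rw [shSum_congr _ _ _ (fun _ _ => (0:S)) (fun es₁ es₂ _ _ => by
            rw [shSumU_congr _ _ _ (fun _ _ => (0:S)) (fun fs₁ fs₂ h1 hsum => by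
              have h2 : fs₂.length = 0 := by rw [hlen] at hsum; omega
              simp [cdel, h2]), shSumU_zero_fn]), shSum_zero_fn]
        rw [hz]; simp
      rw [hTl, add_zero]
      apply Finset.sum_congr rfl
      intro i hi
      rw [Finset.mem_range] at hi
      by_cases h1 : 2*i ≤ n ∧ 2*(k'+1-i) ≤ m+1
      · rw [if_pos h1, if_pos ⟨h1.1, by omega⟩]
      · rw [if_neg h1]
        by_cases h2 : 2*i ≤ n ∧ 2*(k'-i) ≤ m
        · rw [if_pos h2]
          have h3 : ¬ (2*(k'+1-i) ≤ m+1) := fun hb => h1 ⟨h2.1, hb⟩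
          exact (shSum_eq_zero_of_lt _ _ _ (by omega)).symm
        · rw [if_neg h2]
    rw [hL, Finset.sum_congr rfl claim1, Finset.sum_add_distrib, ← Finset.smul_sum,
      claim2, claim3]

end Theorems
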